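/- Let X be a subshift over an alphabet 𝒜, given by forbidden words F, and let X^OTW be the corresponding OTW-subshift. Then for every ξ ∈ dom(σ̂) one has π(σ̂(ξ)) = σ(π(ξ)), and moreover the map π : 𝒰̂ → X^OTW is surjective. -/

import Mathlib

open Set

section Subshift

variable {A : Type*}

/-- The word `w` occurs as a block of `x` at position `i`. -/
def IsBlockAt (x : ℕ → A) (w : List A) (i : ℕ) : Prop :=
  ∀ j, ∀ _ : j < w.length, x (i + j) = w[j]

/-- The subshift `X_F ⊆ 𝒜^ℕ` determined by the set `F` of forbidden words. -/
def SubshiftOf (F : Set (List A)) : Set (ℕ → A) :=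
  {x | ∀ w ∈ F, ∀ i, ¬ IsBlockAt x w i}

/-- The language of the subshift: all finite words occurring in some element of `X_F`. -/
def Lang (F : Set (List A)) : Set (List A) :=
  {w | ∃ x ∈ SubshiftOf F, ∃ i, IsBlockAt x w i}

/-- Concatenation of a finite word with an infinite sequence. -/
def wcat (w : List A) (x : ℕ → A) : ℕ → A := fun n =>
  if h : n < w.length then w[n] else x (n - w.length)

/-- `C(α,β) = {β x ∈ X : α x ∈ X}`. -/
def Cset (F : Set (List A)) (α β : List A) : Set (ℕ → A) :=
  {y | ∃ x : ℕ → A, y = wcat β x ∧ wcat β x ∈ SubshiftOf F ∧ wcat α x ∈ SubshiftOf F}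

/-- The cylinder set `Z_β = C(ω,β)`. -/
def Zcyl (F : Set (List A)) (β : List A) : Set (ℕ → A) := Cset F [] β

/-- The follower set `F_α = C(α,ω)`. -/
def Fol (F : Set (List A)) (α : List A) : Set (ℕ → A) := Cset F α []

/-- The relative range `r(S,w) = {x ∈ X : w x ∈ S}`. -/
def relRange (F : Set (List A)) (S : Set (ℕ → A)) (w : List A) : Set (ℕ → A) :=
  {x | x ∈ SubshiftOf F ∧ wcat w x ∈ S}

/-- Membership in the Boolean algebra `𝒰` of subsets of `X` generated by the sets
`C(α,β)`, `α, β ∈ L_X`: closed under finite unions, finite intersections and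
complements in `X`. -/
inductive InU (F : Set (List A)) : Set (ℕ → A) → Prop
  | base {α β : List A} (hα : α ∈ Lang F) (hβ : β ∈ Lang F) : InU F (Cset F α β)
  | union {S T : Set (ℕ → A)} : InU F S → InU F T → InU F (S ∪ T)
  | inter {S T : Set (ℕ → A)} : InU F S → InU F T → InU F (S ∩ T)
  | compl {S : Set (ℕ → A)} : InU F S → InU F (SubshiftOf F \ S)

/-- `αβ⁻¹` is in reduced form in the free group on the alphabet:
`α` and `β` do not end in the same letter. -/
def ReducedPair (α β : List A) : Prop :=
  ¬ ∃ c : A, α.getLast? = some c ∧ β.getLast? = some c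

/-- Ultrafilters (= prime filters) of the Boolean algebra `𝒰`. -/
structure UltraU (F : Set (List A)) where
  sets : Set (Set (ℕ → A))
  mem_inU : ∀ S ∈ sets, InU F S
  nonempty : sets.Nonempty
  empty_not_mem : ∅ ∉ sets
  inter_mem : ∀ S ∈ sets, ∀ T ∈ sets, S ∩ T ∈ sets
  superset_mem : ∀ S ∈ sets, ∀ T : Set (ℕ → A), InU F T → S ⊆ T → T ∈ sets
  prime : ∀ S T : Set (ℕ → A), InU F S → InU F T → S ∪ T ∈ sets → S ∈ sets ∨ T ∈ sets

/-- The basic (compact) open set `O_S = {ξ ∈ 𝒰̂ : S ∈ ξ}` of the Stone dual `𝒰̂`. -/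
def Oset (F : Set (List A)) (S : Set (ℕ → A)) : Set (UltraU F) := {ξ | S ∈ ξ.sets}

/-- The Stone topology on `𝒰̂`. -/
instance (F : Set (List A)) : TopologicalSpace (UltraU F) :=
  TopologicalSpace.generateFrom {V | ∃ S : Set (ℕ → A), InU F S ∧ V = Oset F S}

/-- The graph of the partially defined map `σ̂` on `𝒰̂`:
`sigmaHatRel F ξ η` holds iff `ξ ∈ dom σ̂` and `η = σ̂(ξ)`. -/
def sigmaHatRel (F : Set (List A)) (ξ η : UltraU F) : Prop :=
  ∃ a : A, Zcyl F [a] ∈ ξ.sets ∧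
    η.sets = {B : Set (ℕ → A) | InU F B ∧ ∃ S ∈ ξ.sets, relRange F S [a] ⊆ B}

/- The OTW subshift, modelled inside `ℕ → Option A`; a finite word corresponds to a
sequence that is eventually `none` (`none` playing the role of the symbol `∞`). -/

/-- The shift map, deleting the first letter (it sends sequences of length `≤ 1`
to the empty sequence). -/
def shiftO (y : ℕ → Option A) : ℕ → Option A := fun i => y (i + 1)

/-- An infinite sequence, as an element of the OTW model. -/
def ofSeq (x : ℕ → A) : ℕ → Option A := fun i => some (x i)

/-- A finite word, as an element of the OTW model. -/
def ofWord (w : List A) : ℕ → Option A := fun i =>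
  if h : i < w.length then some w[i] else none

/-- Concatenation of a finite word with an element of the OTW model. -/
def wcatO (w : List A) (y : ℕ → Option A) : ℕ → Option A := fun n =>
  if h : n < w.length then some w[n] else y (n - w.length)

/-- The finite words belonging to `X^fin`: those `w` for which there are infinitely many
letters `a` such that `w a y ∈ X^inf` for some `y`. -/
def XFin (F : Set (List A)) : Set (List A) :=
  {w | {a : A | ∃ y : ℕ → A, wcat (w ++ [a]) y ∈ SubshiftOf F}.Infinite}

/-- The OTW subshift `X^OTW = X^inf ∪ X^fin`. -/
def OTW (F : Set (List A)) : Set (ℕ → Option A) :=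
  ofSeq '' SubshiftOf F ∪ ofWord '' XFin F

theorem ofSeq_mem_OTW {F : Set (List A)} {x : ℕ → A} (hx : x ∈ SubshiftOf F) :
    ofSeq x ∈ OTW F := Or.inl ⟨x, hx, rfl⟩

theorem ofWord_mem_OTW {F : Set (List A)} {w : List A} (hw : w ∈ XFin F) :
    ofWord w ∈ OTW F := Or.inr ⟨w, hw, rfl⟩

/-- The generalised cylinder `𝒵(w,F') = {y ∈ X^OTW : y` begins with `w`, and the next
letter of `y` is not in `F'}`. -/
def genCyl (F : Set (List A)) (w : List A) (F' : Set A) : Set (ℕ → Option A) :=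
  {y | y ∈ OTW F ∧ (∀ j, ∀ _ : j < w.length, y j = some w[j]) ∧
    ∀ a ∈ F', y w.length ≠ some a}

/-- The follower set `ℱ(w) = {y ∈ X^OTW : w y ∈ X^OTW}` in the OTW subshift. -/
def folO (F : Set (List A)) (w : List A) : Set (ℕ → Option A) :=
  {y | y ∈ OTW F ∧ wcatO w y ∈ OTW F}

/-- The topology on `X^OTW`, generated by the generalised cylinders. -/
instance (F : Set (List A)) : TopologicalSpace ↥(OTW F) :=
  TopologicalSpace.generateFrom
    {V | ∃ w ∈ Lang F, ∃ F' : Set A, F'.Finite ∧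
      V = {y : ↥(OTW F) | (y : ℕ → Option A) ∈ genCyl F w F'}}

/-- The graph of the map `π : 𝒰̂ → X^OTW`: `piRel F ξ y` holds iff `π(ξ) = y`.
(`y` begins with a nonempty word `w` iff `Z_w ∈ ξ`.) -/
def piRel (F : Set (List A)) (ξ : UltraU F) (y : ℕ → Option A) : Prop :=
  (∀ i, y i = none → y (i + 1) = none) ∧
  ∀ w : List A, w ≠ [] →
    ((∀ j, ∀ _ : j < w.length, y j = some w[j]) ↔ Zcyl F w ∈ ξ.sets)

end Subshift

section Conjugacy

variable {A₁ A₂ : Type*}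

/-- `h` commutes with the shift maps. -/
def ShiftCommuting (F₁ : Set (List A₁)) (F₂ : Set (List A₂))
    (h : ↥(OTW F₁) → ↥(OTW F₂)) : Prop :=
  ∀ (y : ↥(OTW F₁)) (hy : shiftO (y : ℕ → Option A₁) ∈ OTW F₁),
    (h ⟨shiftO (y : ℕ → Option A₁), hy⟩ : ℕ → Option A₂) =
      shiftO ((h y : ℕ → Option A₂))

/-- `h` is length-preserving: `h y` and `y` have the same length, i.e. the same
positions where the symbol `∞` (here `none`) occurs. -/
def LengthPreserving (F₁ : Set (List A₁)) (F₂ : Set (List A₂))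
    (h : ↥(OTW F₁) → ↥(OTW F₂)) : Prop :=
  ∀ (y : ↥(OTW F₁)) (i : ℕ),
    ((h y : ℕ → Option A₂) i = none ↔ (y : ℕ → Option A₁) i = none)

/-- A conjugacy of OTW subshifts: a homeomorphism commuting with the shifts and
preserving lengths. -/
def IsConjugacy (F₁ : Set (List A₁)) (F₂ : Set (List A₂))
    (h : ↥(OTW F₁) ≃ₜ ↥(OTW F₂)) : Prop :=
  ShiftCommuting F₁ F₂ ⇑h ∧ LengthPreserving F₁ F₂ ⇑h

/-- The image `h̄(S) = h(S)` of a subset `S ⊆ X₁` under (the restriction to `X₁` of)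
a map `h : X₁^OTW → X₂^OTW`. -/
def hbar (F₁ : Set (List A₁)) (F₂ : Set (List A₂))
    (h : ↥(OTW F₁) → ↥(OTW F₂)) (S : Set (ℕ → A₁)) : Set (ℕ → A₂) :=
  {z | ∃ y : ↥(OTW F₁), (y : ℕ → Option A₁) ∈ ofSeq '' S ∧
    ofSeq z = (h y : ℕ → Option A₂)}

end Conjugacy

/-! `π(ξ)` is determined by the cylinders `Z_w` lying in `ξ`, hence is unique, and `σ̂` carries
`Z_{aw} ∈ ξ` exactly to `Z_w ∈ σ̂(ξ)`, so `π ∘ σ̂ = σ ∘ π`. For surjectivity, restrict genuine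
ultrafilters of `𝒜^ℕ` to `𝒰`: an infinite `x ∈ X` is the image of the principal ultrafilter at `x`,
and a finite word `u ∈ X^fin` is the image of the push-forward, along `a ↦ u a t_a ∈ X`, of a free
ultrafilter on the infinitely many admissible letters `a`. That ultrafilter contains `Z_w` for every
prefix `w` of `u`, but no cylinder longer than `u`, because such a cylinder fixes the letter
after `u`. -/

section

variable {A : Type*} {F : Set (List A)}

def BeginsWith (y : ℕ → Option A) (w : List A) : Prop :=
  ∀ j, ∀ _ : j < w.length, y j = some w[j]

lemma beginsWith_cons {y : ℕ → Option A} {a : A} {w : List A} :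
    BeginsWith y (a :: w) ↔ y 0 = some a ∧ BeginsWith (shiftO y) w := by
  refine ⟨fun h => ⟨h 0 (by simp), fun j hj => h (j + 1) (by simpa using hj)⟩, ?_⟩
  rintro ⟨h0, h⟩ (_ | j) hj
  · exact h0
  · exact h j (by simpa using hj)

lemma BeginsWith.length_le {y : ℕ → Option A} {w : List A} (h : BeginsWith y w) {n : ℕ}
    (hn : y n = none) : w.length ≤ n := by
  by_contra! hlt
  simp [h n hlt] at hn

lemma BeginsWith.of_eqOn {y z : ℕ → Option A} {w : List A} (h : BeginsWith y w) {n : ℕ}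
    (hw : w.length ≤ n) (hyz : ∀ j < n, y j = z j) : BeginsWith z w :=
  fun j hj => (hyz j (by omega)).symm.trans (h j hj)

lemma shift_mem_subshiftOf {x : ℕ → A} (hx : x ∈ SubshiftOf F) (k : ℕ) :
    (fun n => x (n + k)) ∈ SubshiftOf F := fun w hw i hblk =>
  hx w hw (i + k) fun j hj => by rw [Nat.add_right_comm]; exact hblk j hj

lemma ofSeq_wcat_of_lt (v : List A) (x : ℕ → A) {j : ℕ} (hj : j < v.length) :
    ofSeq (wcat v x) j = some v[j] := by
  simp [ofSeq, wcat, hj]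

lemma wcat_singleton_succ (a : A) (x : ℕ → A) (n : ℕ) : wcat [a] x (n + 1) = x n := by
  simp [wcat]

lemma wcat_prefix_drop {x : ℕ → A} {w : List A} (h : BeginsWith (ofSeq x) w) :
    wcat w (fun n => x (n + w.length)) = x := by
  ext1 n
  by_cases hn : n < w.length
  · simpa [wcat, hn, ofSeq] using (h n hn).symm
  · simp only [wcat, hn, dite_false]
    congr 1
    omega

lemma mem_Zcyl_iff {x : ℕ → A} {w : List A} :
    x ∈ Zcyl F w ↔ x ∈ SubshiftOf F ∧ BeginsWith (ofSeq x) w := by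
  constructor
  · rintro ⟨t, rfl, hX, -⟩
    exact ⟨hX, fun j hj => ofSeq_wcat_of_lt w t hj⟩
  · rintro ⟨hx, h⟩
    refine ⟨fun n => x (n + w.length), (wcat_prefix_drop h).symm, ?_, shift_mem_subshiftOf hx _⟩
    rwa [wcat_prefix_drop h]

lemma Zcyl_nil : Zcyl F [] = SubshiftOf F := by
  ext x
  simp [mem_Zcyl_iff, BeginsWith]

lemma tail_mem_Zcyl {a : A} {w : List A} {v : ℕ → A} (hv : v ∈ Zcyl F (a :: w)) :
    (fun n => v (n + 1)) ∈ Zcyl F w := by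
  rw [mem_Zcyl_iff] at hv ⊢
  exact ⟨shift_mem_subshiftOf hv.1 1, (beginsWith_cons.mp hv.2).2⟩

lemma mem_Lang_of_mem_Zcyl {x : ℕ → A} {w : List A} (hx : x ∈ Zcyl F w) : w ∈ Lang F := by
  rw [mem_Zcyl_iff] at hx
  exact ⟨x, hx.1, 0, fun j hj => by simpa [ofSeq] using hx.2 j hj⟩

lemma inU_Zcyl {w : List A} (hw : (Zcyl F w).Nonempty) : InU F (Zcyl F w) := by
  obtain ⟨x, hx⟩ := hw
  have hnil : x ∈ Zcyl F [] := by rw [Zcyl_nil]; exact (mem_Zcyl_iff.mp hx).1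
  exact InU.base (mem_Lang_of_mem_Zcyl hnil) (mem_Lang_of_mem_Zcyl hx)

namespace UltraU

lemma nonempty_of_mem (ξ : UltraU F) {S : Set (ℕ → A)} (hS : S ∈ ξ.sets) : S.Nonempty :=
  Set.nonempty_iff_ne_empty.mpr fun h => ξ.empty_not_mem (h ▸ hS)

def ofUltrafilter (U : Ultrafilter (ℕ → A)) (hU : SubshiftOf F ∈ U) : UltraU F where
  sets := {S | InU F S ∧ S ∈ U}
  mem_inU _ hS := hS.1
  nonempty := by
    refine ⟨Zcyl F [], inU_Zcyl ?_, ?_⟩ <;> rw [Zcyl_nil]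
    exacts [U.nonempty_of_mem hU, hU]
  empty_not_mem h := U.empty_notMem h.2
  inter_mem _ hS _ hT := ⟨hS.1.inter hT.1, U.inter_mem hS.2 hT.2⟩
  superset_mem _ hS _ hT hST := ⟨hT, U.mem_of_superset hS.2 hST⟩
  prime _ _ hS hT hST := (Ultrafilter.union_mem_iff.mp hST.2).imp (⟨hS, ·⟩) (⟨hT, ·⟩)

lemma Zcyl_mem_ofUltrafilter_iff {U : Ultrafilter (ℕ → A)} {hU : SubshiftOf F ∈ U}
    {w : List A} : Zcyl F w ∈ (ofUltrafilter U hU).sets ↔ Zcyl F w ∈ U :=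
  ⟨And.right, fun h => ⟨inU_Zcyl (U.nonempty_of_mem h), h⟩⟩

end UltraU

lemma eq_none_of_le {y : ℕ → Option A} (h : ∀ i, y i = none → y (i + 1) = none)
    {i k : ℕ} (hik : i ≤ k) (hi : y i = none) : y k = none := by
  induction k, hik using Nat.le_induction with
  | base => exact hi
  | succ n _ ih => exact h n ih

lemma piRel_apply_eq_some_iff {ξ : UltraU F} {y : ℕ → Option A} (hy : piRel F ξ y)
    {i : ℕ} {b : A} :
    y i = some b ↔ ∃ w : List A, ∃ hi : i < w.length, w[i] = b ∧ Zcyl F w ∈ ξ.sets := by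
  constructor
  · intro hb
    have hsome : ∀ j ≤ i, y j ≠ none := fun j hj hj0 => by
      simp [eq_none_of_le hy.1 hj hj0] at hb
    let w := List.ofFn fun j : Fin (i + 1) => (y j).getD b
    have hyw : BeginsWith y w := fun j hj => by
      have hji : j ≤ i := by simp only [w, List.length_ofFn] at hj; omega
      simp only [w, List.getElem_ofFn]
      exact (Option.getD_of_ne_none (hsome j hji) b).symm
    refine ⟨w, by simp [w], ?_, (hy.2 w (by simp [w])).mp hyw⟩
    simp only [w, List.getElem_ofFn, hb, Option.getD_some]
  · rintro ⟨w, hi, rfl, hw⟩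
    exact (hy.2 w (List.ne_nil_of_length_pos (by omega))).mpr hw i hi

lemma piRel_unique {ξ : UltraU F} {y z : ℕ → Option A}
    (hy : piRel F ξ y) (hz : piRel F ξ z) : y = z :=
  funext fun _ => Option.ext fun _ => by
    rw [piRel_apply_eq_some_iff hy, piRel_apply_eq_some_iff hz]

lemma Zcyl_mem_sigmaHat_iff {ξ η : UltraU F} {a : A} (ha : Zcyl F [a] ∈ ξ.sets)
    (hη : η.sets = {B | InU F B ∧ ∃ S ∈ ξ.sets, relRange F S [a] ⊆ B}) (w : List A) :
    Zcyl F w ∈ η.sets ↔ Zcyl F (a :: w) ∈ ξ.sets := by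
  rw [hη]
  constructor
  · rintro ⟨-, S, hS, hSw⟩
    have hsub : S ∩ Zcyl F [a] ⊆ Zcyl F (a :: w) := by
      rintro v ⟨hvS, hva⟩
      have hv := mem_Zcyl_iff.mp hva
      have hv0 : v = wcat [a] fun n => v (n + 1) := (wcat_prefix_drop hv.2).symm
      have htail : (fun n => v (n + 1)) ∈ Zcyl F w :=
        hSw ⟨shift_mem_subshiftOf hv.1 1, hv0 ▸ hvS⟩
      exact mem_Zcyl_iff.mpr ⟨hv.1, beginsWith_cons.mpr
        ⟨(beginsWith_cons.mp hv.2).1, (mem_Zcyl_iff.mp htail).2⟩⟩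
    have hmem := ξ.inter_mem S hS _ ha
    exact ξ.superset_mem _ hmem _ (inU_Zcyl ((ξ.nonempty_of_mem hmem).mono hsub)) hsub
  · intro h
    obtain ⟨v, hv⟩ := ξ.nonempty_of_mem h
    refine ⟨inU_Zcyl ⟨_, tail_mem_Zcyl hv⟩, Zcyl F (a :: w), h, ?_⟩
    rintro x ⟨-, hx⟩
    simpa only [wcat_singleton_succ] using tail_mem_Zcyl hx

lemma piRel_shiftO {ξ η : UltraU F} (hξη : sigmaHatRel F ξ η) {y : ℕ → Option A}
    (hy : piRel F ξ y) : piRel F η (shiftO y) := by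
  obtain ⟨a, ha, hη⟩ := hξη
  have hy0 : y 0 = some a := (hy.2 [a] (List.cons_ne_nil a [])).mpr ha 0 (by simp)
  refine ⟨fun i => hy.1 (i + 1), fun w _ => ?_⟩
  rw [Zcyl_mem_sigmaHat_iff ha hη, ← hy.2 (a :: w) (List.cons_ne_nil a w)]
  exact (beginsWith_cons.trans (and_iff_right hy0)).symm

lemma exists_piRel_ofSeq {x : ℕ → A} (hx : x ∈ SubshiftOf F) :
    ∃ ξ : UltraU F, piRel F ξ (ofSeq x) := by
  refine ⟨UltraU.ofUltrafilter (pure x) (Ultrafilter.mem_pure.mpr hx),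
    fun i h => by simp [ofSeq] at h, fun w _ => ?_⟩
  rw [UltraU.Zcyl_mem_ofUltrafilter_iff, Ultrafilter.mem_pure, mem_Zcyl_iff]
  exact (and_iff_right hx).symm

open Filter in
lemma exists_piRel_ofWord {u : List A} (hu : u ∈ XFin F) :
    ∃ ξ : UltraU F, piRel F ξ (ofWord u) := by
  set E := {a : A | ∃ t, wcat (u ++ [a]) t ∈ SubshiftOf F}
  have hE : E.Infinite := hu
  have hextend (a : A) : ∃ t : ℕ → A, a ∈ E → wcat (u ++ [a]) t ∈ SubshiftOf F := by
    by_cases ha : a ∈ E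
    · obtain ⟨t, ht⟩ := ha
      exact ⟨t, fun _ => ht⟩
    · exact ⟨fun _ => a, fun h => absurd h ha⟩
  choose t ht using hextend
  let p a := wcat (u ++ [a]) (t a)
  have := hE.cofinite_inf_principal_neBot
  let V := Ultrafilter.of (cofinite ⊓ 𝓟 E)
  have hV : ↑V ≤ cofinite ⊓ 𝓟 E := Ultrafilter.of_le _
  have hEV : E ∈ V := hV (mem_inf_of_right (mem_principal_self E))
  have hU : SubshiftOf F ∈ V.map p := Ultrafilter.mem_map.mpr (V.mem_of_superset hEV ht)
  refine ⟨UltraU.ofUltrafilter (V.map p) hU, fun i h => ?_, fun w _ => ?_⟩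
  · have hi : u.length ≤ i := by
      by_contra! hi
      simp [ofWord, hi] at h
    simp only [ofWord, dif_neg (show ¬ i + 1 < u.length by omega)]
  rw [UltraU.Zcyl_mem_ofUltrafilter_iff, Ultrafilter.mem_map]
  have hpu (a : A) (j : ℕ) (hj : j < u.length) : ofWord u j = ofSeq (p a) j := by
    rw [ofSeq_wcat_of_lt _ _ (by simp; omega), List.getElem_append_left hj]
    simp [ofWord, hj]
  have hpa (a : A) : ofSeq (p a) u.length = some a := by
    rw [ofSeq_wcat_of_lt _ _ (by simp), List.getElem_concat_length rfl]
  constructor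
  · intro (h : BeginsWith (ofWord u) w)
    have hlen := h.length_le (n := u.length) (by simp [ofWord])
    exact V.mem_of_superset hEV fun a ha => mem_Zcyl_iff.mpr ⟨ht a ha, h.of_eqOn hlen (hpu a)⟩
  · intro hS
    have hlen : w.length ≤ u.length := by
      by_contra! hlt
      have hne : {a | a ≠ w[u.length]} ∈ V :=
        (hV.trans inf_le_left) (eventually_cofinite_ne _)
      obtain ⟨a, haS, ha⟩ := V.nonempty_of_mem (inter_mem hS hne)
      exact ha (Option.some.inj ((hpa a).symm.trans ((mem_Zcyl_iff.mp haS).2 _ hlt)))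
    obtain ⟨a, haS⟩ := V.nonempty_of_mem hS
    exact (mem_Zcyl_iff.mp haS).2.of_eqOn hlen fun j hj => (hpu a j hj).symm

end

theorem pi_intertwines_shifts_and_surjective {A : Type*} (F : Set (List A)) :
    (∀ ξ η : UltraU F, sigmaHatRel F ξ η →
      ∀ y y' : ℕ → Option A, piRel F ξ y → piRel F η y' → y' = shiftO y) ∧
    ∀ y ∈ OTW F, ∃ ξ : UltraU F, piRel F ξ y := by
  refine ⟨fun ξ η hξη y y' hy hy' => piRel_unique hy' (piRel_shiftO hξη hy), ?_⟩
  rintro y (⟨x, hx, rfl⟩ | ⟨u, hu, rfl⟩)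
  exacts [exists_piRel_ofSeq hx, exists_piRel_ofWord hu]
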